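/- arXiv:2104.08176 — 5 statements merged into one kernel-verified Lean document; each statement's English description precedes it below -/
import Mathlib

section
/- Let $X$ be a Hausdorff uniform space and $q$ a $\mathcal{U}$-istance on $X$. If $q(x,y)=0$ and $q(y,x)=0$ for points $x,y \in X$, then $x = y$. -/
/-- A sequence is `q`-Cauchy if for each `ε > 0` there is `n₀` such that
`q (x n) (x m) < ε` whenever `n₀ < m < n`. -/
def QCauchySeq {X : Type*} (q : X → X → ℝ) (x : ℕ → X) : Prop :=
  ∀ ε : ℝ, 0 < ε → ∃ n₀ : ℕ, ∀ m n : ℕ, n₀ < m → m < n → q (x n) (x m) < ε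

/-- A `𝒰`-istance on a uniform space `X`. -/
structure IsIstance (X : Type*) [UniformSpace X] (q : X → X → ℝ) : Prop where
  nonneg : ∀ x y, 0 ≤ q x y
  triangle : ∀ x y z : X, q z x ≤ q z y + q y x
  lsc : ∀ x : X, LowerSemicontinuous fun y => q y x
  cauchy : ∀ x : ℕ → X, QCauchySeq q x → CauchySeq x
theorem istance_zero_symm_eq {X : Type*} [UniformSpace X] [T2Space X]
    (q : X → X → ℝ) (hq : IsIstance X q) (x y : X)
    (hxy : q x y = 0) (hyx : q y x = 0) : x = y := by
  have hxx : q x x = 0 :=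
    le_antisymm (by have := hq.triangle x y x; linarith) (hq.nonneg x x)
  have hyy : q y y = 0 :=
    le_antisymm (by have := hq.triangle y x y; linarith) (hq.nonneg y y)
  set u : ℕ → X := fun n => if Even n then x else y with hu
  have hval : ∀ a b : X, (a = x ∨ a = y) → (b = x ∨ b = y) → q a b = 0 := by
    rintro a b (rfl | rfl) (rfl | rfl) <;> assumption
  have hmem : ∀ n, u n = x ∨ u n = y := by
    intro n; simp only [hu]; split <;> simp
  have hcau : CauchySeq u := by
    apply hq.cauchy
    intro ε hε
    exact ⟨0, fun m n _ _ => by rw [hval _ _ (hmem n) (hmem m)]; exact hε⟩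
  have h1 : Filter.Tendsto u Filter.atTop (nhds x) := by
    refine tendsto_nhds_of_cauchySeq_of_subseq hcau
      (Filter.tendsto_atTop_mono (fun n => Nat.le_mul_of_pos_left n two_pos)
        Filter.tendsto_id) (f := fun n => 2 * n) ?_
    have : (u ∘ fun n => 2 * n) = fun _ => x := by
      funext n; simp [hu, Nat.even_iff]
    rw [this]; exact tendsto_const_nhds
  have h2 : Filter.Tendsto u Filter.atTop (nhds y) := by
    refine tendsto_nhds_of_cauchySeq_of_subseq hcau
      (Filter.tendsto_atTop_mono (fun n => Nat.le_succ_of_le (Nat.le_mul_of_pos_left n two_pos))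
        Filter.tendsto_id) (f := fun n => 2 * n + 1) ?_
    have : (u ∘ fun n => 2 * n + 1) = fun _ => y := by
      funext n; simp [hu, Nat.even_iff, Nat.add_mod]
    rw [this]; exact tendsto_const_nhds
  exact tendsto_nhds_unique h1 h2
end

section
/- Let $(X,\mathcal{U})$ be a complete Hausdorff uniform space, $q$ a $\mathcal{U}$-istance, and $\psi\colon X\to\mathbb{R}$ lower semicontinuous and bounded below. Define $y\preceq x$ iff $\psi(y)+q(y,x)-\psi(x)\le 0$. If $C\subset X$ is a nonempty maximal chain for $\preceq$ such that for all distinct $x,y\in C$ either $q(x,y)=0$ or $q(y,x)=0$, then $C$ has a unique smallest element. -/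
/-- Auxiliary: a dependent-choice style recursion producing a sequence together with
step-invariants. -/
noncomputable def depSeqS {α : Type*} (P : ℕ → α → Prop) (R : ℕ → α → α → Prop)
    (a₀ : α) (h₀ : P 0 a₀) (step : ∀ n a, P n a → ∃ b, P (n + 1) b ∧ R n a b) :
    (n : ℕ) → { a : α // P n a }
  | 0 => ⟨a₀, h₀⟩
  | n + 1 =>
    let p := depSeqS P R a₀ h₀ step n
    ⟨(step n p.1 p.2).choose, (step n p.1 p.2).choose_spec.1⟩

theorem depSeqS_rel {α : Type*} (P : ℕ → α → Prop) (R : ℕ → α → α → Prop)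
    (a₀ : α) (h₀ : P 0 a₀) (step : ∀ n a, P n a → ∃ b, P (n + 1) b ∧ R n a b) (n : ℕ) :
    R n (depSeqS P R a₀ h₀ step n).1 (depSeqS P R a₀ h₀ step (n + 1)).1 :=
  (step n (depSeqS P R a₀ h₀ step n).1 (depSeqS P R a₀ h₀ step n).2).choose_spec.2

theorem maximal_chain_smallest_element {X : Type*} [UniformSpace X] [T2Space X]
    [CompleteSpace X] (q : X → X → ℝ) (hq : IsIstance X q)
    (ψ : X → ℝ) (hψ : LowerSemicontinuous ψ) (hbd : BddBelow (Set.range ψ))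
    (r : X → X → Prop) (hr : ∀ y x, r y x ↔ ψ y + q y x - ψ x ≤ 0)
    (C : Set X) (hC : C.Nonempty) (hmax : IsMaxChain r C)
    (hzero : ∀ x ∈ C, ∀ y ∈ C, x ≠ y → q x y = 0 ∨ q y x = 0) :
    ∃! x, x ∈ C ∧ ∀ y ∈ C, y ≠ x → r x y := by
  classical
  obtain ⟨p₀, hp₀⟩ := hC
  have hqle : ∀ a b : X, r a b → ψ a + q a b ≤ ψ b := fun a b h => by
    have := (hr a b).1 h; linarith
  have hmono : ∀ a b : X, r a b → ψ a ≤ ψ b := fun a b h => by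
    have h1 := hqle a b h; have := hq.nonneg a b; linarith
  have rtrans : ∀ a b c : X, r a b → r b c → r a c := by
    intro a b c h1 h2
    have h1' := hqle a b h1
    have h2' := hqle b c h2
    have ht := hq.triangle c b a
    rw [hr]; linarith
  -- uniqueness of a smallest element
  have huniq : ∀ x₁ x₂ : X, (x₁ ∈ C ∧ ∀ y ∈ C, y ≠ x₁ → r x₁ y) →
      (x₂ ∈ C ∧ ∀ y ∈ C, y ≠ x₂ → r x₂ y) → x₂ = x₁ := by
    intro x₁ x₂ h₁ h₂
    by_contra hne
    have h12 : r x₁ x₂ := h₁.2 x₂ h₂.1 hne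
    have h21 : r x₂ x₁ := h₂.2 x₁ h₁.1 (Ne.symm hne)
    have e12 := hqle _ _ h12
    have e21 := hqle _ _ h21
    have n12 := hq.nonneg x₁ x₂
    have n21 := hq.nonneg x₂ x₁
    have hz12 : q x₁ x₂ = 0 := by linarith
    have hz21 : q x₂ x₁ = 0 := by linarith
    have hz11 : q x₁ x₁ = 0 :=
      le_antisymm (by have := hq.triangle x₁ x₂ x₁; linarith) (hq.nonneg _ _)
    have hz22 : q x₂ x₂ = 0 :=
      le_antisymm (by have := hq.triangle x₂ x₁ x₂; linarith) (hq.nonneg _ _)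
    obtain ⟨alt, halt⟩ : ∃ f : ℕ → X, ∀ k, f k = if Even k then x₁ else x₂ :=
      ⟨fun k => if Even k then x₁ else x₂, fun _ => rfl⟩
    have hsq : QCauchySeq q alt := by
      intro ε hε
      refine ⟨0, fun m' n' _ _ => ?_⟩
      have hz : q (alt n') (alt m') = 0 := by
        by_cases h1 : Even n' <;> by_cases h2 : Even m' <;>
          simp [halt, h1, h2, hz11, hz12, hz21, hz22]
      rw [hz]; exact hε
    obtain ⟨a, ha⟩ := cauchySeq_tendsto_of_complete (hq.cauchy alt hsq)
    have h2n : Filter.Tendsto (fun n : ℕ => 2 * n) Filter.atTop Filter.atTop :=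
      Filter.tendsto_atTop_atTop.2 fun b => ⟨b, fun a' ha' => by omega⟩
    have h2n1 : Filter.Tendsto (fun n : ℕ => 2 * n + 1) Filter.atTop Filter.atTop :=
      Filter.tendsto_atTop_atTop.2 fun b => ⟨b, fun a' ha' => by omega⟩
    have hx1 : Filter.Tendsto (fun n : ℕ => alt (2 * n)) Filter.atTop (nhds a) := ha.comp h2n
    have hx2 : Filter.Tendsto (fun n : ℕ => alt (2 * n + 1)) Filter.atTop (nhds a) := ha.comp h2n1
    have heq1 : (fun n : ℕ => alt (2 * n)) = fun _ => x₁ := by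
      funext n
      have he : Even (2 * n) := ⟨n, two_mul n⟩
      simp [halt, he]
    have heq2 : (fun n : ℕ => alt (2 * n + 1)) = fun _ => x₂ := by
      funext n
      have he : ¬ Even (2 * n + 1) := by
        simp [Nat.even_add_one, parity_simps]
      simp [halt, he]
    rw [heq1] at hx1
    rw [heq2] at hx2
    have hax1 : x₁ = a := tendsto_nhds_unique tendsto_const_nhds hx1
    have hax2 : x₂ = a := tendsto_nhds_unique tendsto_const_nhds hx2
    exact hne (hax2.trans hax1.symm)
  by_cases hmin : ∀ b ∈ C, ∃ z ∈ C, r z b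
  · -- main case: no r-minimal element, use the tail filter
    set m := sInf (ψ '' C) with hm
    have hbddI : BddBelow (ψ '' C) := hbd.mono (Set.image_subset_range ψ C)
    have hmle : ∀ x ∈ C, m ≤ ψ x := fun x hx => csInf_le hbddI ⟨x, hx, rfl⟩
    have hex_near : ∀ ε : ℝ, 0 < ε → ∃ w ∈ C, ψ w < m + ε := by
      intro ε hε
      obtain ⟨y, hy, hylt⟩ := Real.lt_sInf_add_pos (Set.Nonempty.image ψ ⟨p₀, hp₀⟩) hε
      obtain ⟨w, hw, rfl⟩ := hy
      exact ⟨w, hw, hylt⟩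
    choose low hlowC hlowr using hmin
    have hW : ∀ (p : X), p ∈ C → ∀ ε : ℝ, 0 < ε →
        ∃ w, w ∈ C ∧ (r w p ∨ w = p) ∧ ψ w < m + ε := by
      intro p hp ε hε
      obtain ⟨w', hw'C, hw'⟩ := hex_near ε hε
      by_cases hwp : w' = p
      · exact ⟨p, hp, Or.inr rfl, hwp ▸ hw'⟩
      · rcases hmax.1 hw'C hp hwp with h | h
        · exact ⟨w', hw'C, Or.inl h, hw'⟩
        · exact ⟨p, hp, Or.inr rfl, lt_of_le_of_lt (hmono p w' h) hw'⟩
    -- KEY: the tail filter is Cauchy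
    have key : ∀ V ∈ uniformity X, ∃ b, b ∈ C ∧ ∀ z w : X,
        (z ∈ C ∧ (r z b ∨ z = b)) → (w ∈ C ∧ (r w b ∨ w = b)) → (z, w) ∈ V := by
      intro V hV
      by_contra hcon
      push_neg at hcon
      have hbad : ∀ b, b ∈ C → ∃ z w : X, (z ∈ C ∧ (r z b ∨ z = b)) ∧
          (w ∈ C ∧ (r w b ∨ w = b)) ∧ (z, w) ∉ V := by
        intro b hb
        obtain ⟨z, w, h1, h2, h3⟩ := hcon b hb
        exact ⟨z, w, h1, h2, h3⟩
      have pairchain : ∀ w, w ∈ C → ∃ g₁ g₂ u v : X, g₁ ∈ C ∧ g₂ ∈ C ∧ r g₁ w ∧ r g₂ g₁ ∧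
          (u, v) ∉ V ∧ (u = w ∨ u = g₁ ∨ u = g₂) ∧ (v = w ∨ v = g₁ ∨ v = g₂) := by
        intro w hw
        obtain ⟨c, d, ⟨hcC, hcr⟩, ⟨hdC, hdr⟩, hcd⟩ := hbad w hw
        have hnecd : c ≠ d := by
          rintro rfl; exact hcd (refl_mem_uniformity hV)
        by_cases hcw : c = w
        · have hdw : d ≠ w := fun h => hnecd (hcw.trans h.symm)
          have hrdw : r d w := hdr.resolve_right hdw
          exact ⟨d, low d hdC, c, d, hdC, hlowC d hdC, hrdw, hlowr d hdC, hcd,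
            Or.inl hcw, Or.inr (Or.inl rfl)⟩
        · by_cases hdw : d = w
          · have hrcw : r c w := hcr.resolve_right hcw
            exact ⟨c, low c hcC, c, d, hcC, hlowC c hcC, hrcw, hlowr c hcC, hcd,
              Or.inr (Or.inl rfl), Or.inl hdw⟩
          · have hrcw : r c w := hcr.resolve_right hcw
            have hrdw : r d w := hdr.resolve_right hdw
            rcases hmax.1 hcC hdC hnecd with h | h
            · -- r c d : take g₁ = d, g₂ = c
              exact ⟨d, c, c, d, hdC, hcC, hrdw, h, hcd,
                Or.inr (Or.inr rfl), Or.inr (Or.inl rfl)⟩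
            · exact ⟨c, d, c, d, hcC, hdC, hrcw, h, hcd,
                Or.inr (Or.inl rfl), Or.inr (Or.inr rfl)⟩
      set P : ℕ → X × X × X × X → Prop := fun k e =>
        e.1 ∈ C ∧ e.2.1 ∈ C ∧ e.2.2.1 ∈ C ∧ e.2.2.2 ∈ C ∧
        r e.2.1 e.1 ∧ r e.2.2.1 e.2.1 ∧ r e.2.2.2 e.2.2.1 ∧
        ψ e.2.1 < m + 1 / (k + 1) ∧
        ∃ u v : X, (u, v) ∉ V ∧
          (u = e.1 ∨ u = e.2.1 ∨ u = e.2.2.1 ∨ u = e.2.2.2) ∧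
          (v = e.1 ∨ v = e.2.1 ∨ v = e.2.2.1 ∨ v = e.2.2.2) with hPdef
      have step_ex : ∀ (k : ℕ) (p : X), p ∈ C → ∃ e : X × X × X × X, e.1 = p ∧ P k e := by
        intro k p hp
        have hεpos : (0 : ℝ) < 1 / (k + 1) := by positivity
        obtain ⟨w, hwC, hwr, hwψ⟩ := hW p hp _ hεpos
        obtain ⟨g₁, g₂, u, v, hg₁C, hg₂C, hr₁, hr₂, huv, hu, hv⟩ := pairchain w hwC
        rcases hwr with hwr | rfl
        · refine ⟨(p, w, g₁, g₂), rfl, hp, hwC, hg₁C, hg₂C, hwr, hr₁, hr₂, hwψ,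
            u, v, huv, ?_, ?_⟩
          · rcases hu with h | h | h
            · exact Or.inr (Or.inl h)
            · exact Or.inr (Or.inr (Or.inl h))
            · exact Or.inr (Or.inr (Or.inr h))
          · rcases hv with h | h | h
            · exact Or.inr (Or.inl h)
            · exact Or.inr (Or.inr (Or.inl h))
            · exact Or.inr (Or.inr (Or.inr h))
        · refine ⟨(w, g₁, g₂, low g₂ hg₂C), rfl, hwC, hg₁C, hg₂C, hlowC g₂ hg₂C,
            hr₁, hr₂, hlowr g₂ hg₂C, lt_of_le_of_lt (hmono g₁ w hr₁) hwψ,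
            u, v, huv, ?_, ?_⟩
          · rcases hu with h | h | h
            · exact Or.inl h
            · exact Or.inr (Or.inl h)
            · exact Or.inr (Or.inr (Or.inl h))
          · rcases hv with h | h | h
            · exact Or.inl h
            · exact Or.inr (Or.inl h)
            · exact Or.inr (Or.inr (Or.inl h))
      set R : ℕ → X × X × X × X → X × X × X × X → Prop := fun _ a b => b.1 = a.2.2.2 with hRdef
      obtain ⟨e₀, he₀p, he₀⟩ := step_ex 0 p₀ hp₀
      have hstep : ∀ n a, P n a → ∃ b, P (n + 1) b ∧ R n a b := by
        intro n a ha
        obtain ⟨e, hep, he⟩ := step_ex (n + 1) a.2.2.2 ha.2.2.2.1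
        exact ⟨e, he, hep⟩
      obtain ⟨blk, hblk, hrel⟩ : ∃ blk : ℕ → X × X × X × X,
          (∀ n, P n (blk n)) ∧ (∀ n, (blk (n + 1)).1 = (blk n).2.2.2) :=
        ⟨fun n => (depSeqS P R e₀ he₀ hstep n).1, fun n => (depSeqS P R e₀ he₀ hstep n).2,
         fun n => depSeqS_rel P R e₀ he₀ hstep n⟩
      obtain ⟨σ, hσ0, hσs⟩ : ∃ σ : ℕ → X, σ 0 = (blk 0).1 ∧ ∀ k, σ (k + 1) =
          (if k % 3 = 0 then (blk (k / 3)).2.1 else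
            if k % 3 = 1 then (blk (k / 3)).2.2.1 else (blk (k / 3)).2.2.2) :=
        ⟨fun k => match k with
          | 0 => (blk 0).1
          | (k + 1) => if k % 3 = 0 then (blk (k / 3)).2.1 else
              if k % 3 = 1 then (blk (k / 3)).2.2.1 else (blk (k / 3)).2.2.2,
         rfl, fun _ => rfl⟩
      have hpos1 : ∀ n, σ (3 * n + 1) = (blk n).2.1 := by
        intro n
        rw [hσs]
        have h1 : (3 * n) % 3 = 0 := by omega
        have h2 : (3 * n) / 3 = n := by omega
        simp [h1, h2]
      have hpos2 : ∀ n, σ (3 * n + 2) = (blk n).2.2.1 := by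
        intro n
        have he : 3 * n + 2 = (3 * n + 1) + 1 := by omega
        rw [he, hσs]
        have h1 : (3 * n + 1) % 3 = 1 := by omega
        have h2 : (3 * n + 1) / 3 = n := by omega
        simp [h1, h2]
      have hpos3 : ∀ n, σ (3 * n + 3) = (blk n).2.2.2 := by
        intro n
        have he : 3 * n + 3 = (3 * n + 2) + 1 := by omega
        rw [he, hσs]
        have h1 : (3 * n + 2) % 3 = 2 := by omega
        have h2 : (3 * n + 2) / 3 = n := by omega
        simp [h1, h2]
      have hpos0 : ∀ n, σ (3 * n) = (blk n).1 := by
        intro n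
        cases n with
        | zero => simpa using hσ0
        | succ n =>
          have he : 3 * (n + 1) = 3 * n + 3 := by ring
          rw [he, hpos3 n, hrel n]
      have hstep1 : ∀ k, r (σ (k + 1)) (σ k) := by
        intro k
        obtain ⟨a, ha3⟩ : ∃ a, k = 3 * a ∨ k = 3 * a + 1 ∨ k = 3 * a + 2 := ⟨k / 3, by omega⟩
        rcases ha3 with rfl | rfl | rfl
        · rw [hpos1 a, hpos0 a]; exact (hblk a).2.2.2.2.1
        · rw [show 3 * a + 1 + 1 = 3 * a + 2 from by omega, hpos2 a, hpos1 a]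
          exact (hblk a).2.2.2.2.2.1
        · rw [show 3 * a + 2 + 1 = 3 * a + 3 from by omega, hpos3 a, hpos2 a]
          exact (hblk a).2.2.2.2.2.2.1
      have hchain2 : ∀ j i, i < j → r (σ j) (σ i) := by
        intro j
        induction j with
        | zero => intro i hi; exact absurd hi (Nat.not_lt_zero i)
        | succ j ih =>
          intro i hij
          rcases Nat.lt_succ_iff_lt_or_eq.mp hij with h | rfl
          · exact rtrans _ _ _ (hstep1 j) (ih i h)
          · exact hstep1 i
      have hσC : ∀ k, σ k ∈ C := by
        intro k
        cases k with
        | zero => rw [hσ0]; exact (hblk 0).1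
        | succ k =>
          obtain ⟨a, h3⟩ : ∃ a, k + 1 = 3 * a + 1 ∨ k + 1 = 3 * a + 2 ∨ k + 1 = 3 * a + 3 :=
            ⟨k / 3, by omega⟩
          rcases h3 with h | h | h
          · rw [h, hpos1 a]; exact (hblk a).2.1
          · rw [h, hpos2 a]; exact (hblk a).2.2.1
          · rw [h, hpos3 a]; exact (hblk a).2.2.2.1
      have hψbd : ∀ (n k : ℕ), 3 * n + 1 ≤ k → ψ (σ k) < m + 1 / (n + 1) := by
        intro n k hk
        obtain ⟨a, hak, han⟩ : ∃ a, (k = 3 * a + 1 ∨ k = 3 * a + 2 ∨ k = 3 * a + 3) ∧ n ≤ a :=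
          ⟨(k - 1) / 3, by omega, by omega⟩
        have h1 : ψ (σ (3 * a + 1)) < m + 1 / (a + 1) := by
          rw [hpos1 a]; exact (hblk a).2.2.2.2.2.2.2.1
        have h2 : ψ (σ k) ≤ ψ (σ (3 * a + 1)) := by
          rcases hak with rfl | rfl | rfl
          · exact le_refl _
          · exact hmono _ _ (hchain2 _ _ (by omega))
          · exact hmono _ _ (hchain2 _ _ (by omega))
        have h3 : 1 / ((a : ℝ) + 1) ≤ 1 / ((n : ℝ) + 1) := by
          apply one_div_le_one_div_of_le (by positivity)
          exact_mod_cast Nat.succ_le_succ han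
        linarith
      have hQC : QCauchySeq q σ := by
        intro ε hε
        obtain ⟨n, hn⟩ := exists_nat_one_div_lt hε
        refine ⟨3 * n + 1, fun m' n' hm' hn' => ?_⟩
        have hrr : r (σ n') (σ m') := hchain2 n' m' (by omega)
        have h1 := hqle _ _ hrr
        have h2 := hmle (σ n') (hσC n')
        have h3 : ψ (σ m') < m + 1 / (n + 1) := hψbd n m' (by omega)
        linarith
      obtain ⟨N, hN⟩ := cauchySeq_iff.mp (hq.cauchy σ hQC) V hV
      obtain ⟨u, v, huvV, hu, hv⟩ := (hblk N).2.2.2.2.2.2.2.2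
      have hfind : ∀ w : X, (w = (blk N).1 ∨ w = (blk N).2.1 ∨ w = (blk N).2.2.1 ∨
          w = (blk N).2.2.2) → ∃ i, N ≤ i ∧ σ i = w := by
        intro w hw
        rcases hw with rfl | rfl | rfl | rfl
        · exact ⟨3 * N, by omega, hpos0 N⟩
        · exact ⟨3 * N + 1, by omega, hpos1 N⟩
        · exact ⟨3 * N + 2, by omega, hpos2 N⟩
        · exact ⟨3 * N + 3, by omega, hpos3 N⟩
      obtain ⟨i, hi, hiw⟩ := hfind u hu
      obtain ⟨j, hj, hjw⟩ := hfind v hv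
      rw [← hiw, ← hjw] at huvV
      exact huvV (hN i hi j hj)
    -- tail filter
    haveI hneC : Nonempty { b : X // b ∈ C } := ⟨⟨p₀, hp₀⟩⟩
    set T : X → Set X := fun b => {z | z ∈ C ∧ (r z b ∨ z = b)} with hTdef
    set F : Filter X := ⨅ b : { b : X // b ∈ C }, Filter.principal (T b.1) with hFdef
    have hTsub : ∀ b c : X, b ∈ C → c ∈ C → r b c → T b ⊆ T c := by
      intro b c hb hc hbc z hz
      exact ⟨hz.1, Or.inl (hz.2.elim (fun h => rtrans _ _ _ h hbc) (fun h => h ▸ hbc))⟩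
    have hdir : Directed (· ≥ ·) (fun b : { b : X // b ∈ C } => Filter.principal (T b.1)) := by
      intro b c
      by_cases hbc : b.1 = c.1
      · have hbceq : b = c := Subtype.ext hbc
        subst hbceq
        exact ⟨b, le_rfl, le_rfl⟩
      · rcases hmax.1 b.2 c.2 hbc with h | h
        · exact ⟨b, le_rfl, Filter.principal_mono.2 (hTsub _ _ b.2 c.2 h)⟩
        · exact ⟨c, Filter.principal_mono.2 (hTsub _ _ c.2 b.2 h), le_rfl⟩
    have hpne : ∀ b : { b : X // b ∈ C }, (Filter.principal (T b.1)).NeBot := fun b =>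
      Filter.principal_neBot_iff.2 ⟨b.1, b.2, Or.inr rfl⟩
    haveI hFne : F.NeBot := Filter.iInf_neBot_of_directed' hdir hpne
    have hTF : ∀ b : X, b ∈ C → T b ∈ F := fun b hb =>
      Filter.mem_iInf_of_mem ⟨b, hb⟩ (Filter.mem_principal_self _)
    have hFc : Cauchy F := by
      rw [cauchy_iff]
      refine ⟨hFne, fun V hV => ?_⟩
      obtain ⟨b, hb, hball⟩ := key V hV
      refine ⟨T b, hTF b hb, ?_⟩
      rintro ⟨z, w⟩ hzw
      rw [Set.mem_prod] at hzw
      exact hball z w hzw.1 hzw.2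
    obtain ⟨xst, hxst⟩ := CompleteSpace.complete hFc
    have hrstar : ∀ b ∈ C, r xst b := by
      intro b hb
      rw [hr]
      by_contra hlt
      push_neg at hlt
      have hδ : 0 < ψ xst + q xst b - ψ b := by linarith
      have hzC := hlowC b hb
      have hzr := hlowr b hb
      set z := low b hb with hz
      have hbound : ∀ w ∈ T z, ψ w + q w b ≤ ψ b := by
        intro w hw
        rcases hw.2 with hwz | hwz
        · have h1 := hqle w z hwz
          have h2 := hqle z b hzr
          have h3 := hq.triangle b z w
          linarith
        · have h2 := hqle z b hzr
          rw [hwz]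
          linarith
      obtain ⟨s, t, hs, ht, hst⟩ : ∃ s t : ℝ, s < ψ xst ∧ t < q xst b ∧ ψ b ≤ s + t :=
        ⟨ψ xst - (ψ xst + q xst b - ψ b) / 2, q xst b - (ψ xst + q xst b - ψ b) / 2,
          by linarith, by linarith, by linarith⟩
      have hE1 : {w : X | s < ψ w} ∈ nhds xst := hψ xst s hs
      have hE2 : {w : X | t < q w b} ∈ nhds xst := hq.lsc b xst t ht
      have hE : ({w : X | s < ψ w} ∩ {w : X | t < q w b} ∩ T z) ∈ F :=
        F.inter_sets (F.inter_sets (hxst hE1) (hxst hE2)) (hTF z hzC)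
      obtain ⟨w, ⟨hw1, hw2⟩, hw3⟩ := Filter.nonempty_of_mem hE
      have := hbound w hw3
      simp only [Set.mem_setOf_eq] at hw1 hw2
      linarith
    have hchainI : IsChain r (insert xst C) :=
      hmax.1.insert fun b hb _ => Or.inl (hrstar b hb)
    have hxC : xst ∈ C := by
      have h := hmax.2 hchainI (Set.subset_insert _ _)
      rw [h]
      exact Set.mem_insert _ _
    have hsm : ∀ y ∈ C, y ≠ xst → r xst y := fun y hy _ => hrstar y hy
    exact ⟨xst, ⟨hxC, hsm⟩, fun y hy => huniq xst y ⟨hxC, hsm⟩ hy⟩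
  · -- there is an r-minimal element; it is the smallest
    push_neg at hmin
    obtain ⟨b, hb, hbmin⟩ := hmin
    have hsm : ∀ y ∈ C, y ≠ b → r b y := by
      intro y hy hne
      rcases hmax.1 hb hy (Ne.symm hne) with h | h
      · exact h
      · exact absurd h (hbmin y hy)
    exact ⟨b, ⟨hb, hsm⟩, fun y hy => huniq b y ⟨hb, hsm⟩ hy⟩
end

section
/- Let $(X,\mathcal{U})$ be a uniform space, $q$ a $\mathcal{U}$-istance satisfying $q(x,y)=0\Rightarrow x=y$, and $\psi\colon X\to\mathbb{R}$ lower semicontinuous, bounded below, with $\{z: \psi(z)\le\alpha\}$ complete for each $\alpha\in\mathbb{R}$. Let $B=\{z\in X:\psi(z)=\inf_X\psi\}$ and suppose for each $x\in X\setminus B$ there exists $y\ne x$ with $\psi(y)+q(y,x)\le\psi(x)$. Then for any $x_0\in X\setminus B$ there exists a maximal chain $A$ (for the relation $y\preceq x$ iff $\psi(y)+q(y,x)\le\psi(x)$) containing $x_0$, and any such maximal chain has a unique smallest element $x$ satisfying: (i) $\psi(x)=\inf_X\psi$; (ii) $\psi(x)+q(x,x_0)-\psi(x_0)=\inf\{\psi(z)+q(z,x_0)-\psi(x_0):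 z\in A\}\le 0$; (iii) $\psi(y)+q(y,x)-\psi(x)>0$ for all $y\ne x$. -/
open Filter Set

lemma exists_min_of_maxChain {X : Type*} [UniformSpace X]
    (q : X → X → ℝ) (hq : IsIstance X q) (hq0 : ∀ x y : X, q x y = 0 → x = y)
    (ψ : X → ℝ) (hψ : LowerSemicontinuous ψ) (hbd : BddBelow (Set.range ψ))
    (hcomp : ∀ α : ℝ, IsComplete {z : X | ψ z ≤ α})
    (r : X → X → Prop) (hr : ∀ y x, r y x ↔ ψ y + q y x ≤ ψ x)
    (A : Set X) (hA : IsMaxChain r A) (a0 : X) (ha0 : a0 ∈ A) :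
    ∃ x ∈ A, ∀ w ∈ A, w ≠ x → ψ x + q x w ≤ ψ w := by
  set infA := sInf (ψ '' A) with hinfA
  have hbddA : BddBelow (ψ '' A) := hbd.mono (Set.image_subset_range ψ A)
  have hneA : (ψ '' A).Nonempty := ⟨ψ a0, a0, ha0, rfl⟩
  have hinfle : ∀ z ∈ A, infA ≤ ψ z := fun z hz => csInf_le hbddA ⟨z, hz, rfl⟩
  have attain : ∃ z ∈ A, ψ z ≤ infA := by
    by_contra hcon
    push_neg at hcon
    -- hcon : ∀ z ∈ A, infA < ψ z
    have key : ∀ c : ℝ, infA < c → ∃ z ∈ A, ψ z < c := by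
      intro c hc
      obtain ⟨y, hy, hyc⟩ := exists_lt_of_csInf_lt hneA hc
      obtain ⟨z, hz, rfl⟩ := hy
      exact ⟨z, hz, hyc⟩
    have step : ∀ (n : ℕ) (z : X), z ∈ A →
        ∃ z', z' ∈ A ∧ ψ z' < min (ψ z) (infA + 1/(n+1)) := by
      intro n z hz
      exact key _ (lt_min (hcon z hz) (by
        have : (0:ℝ) < 1/(n+1) := by positivity
        linarith))
    let u : ℕ → {z : X // z ∈ A} := fun n => Nat.rec ⟨a0, ha0⟩
      (fun n p => ⟨(step n p.1 p.2).choose, (step n p.1 p.2).choose_spec.1⟩) n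
    have husucc : ∀ n, ψ (u (n+1)).1 < min (ψ (u n).1) (infA + 1/(n+1)) :=
      fun n => (step n (u n).1 (u n).2).choose_spec.2
    have hdec : ∀ n, ψ (u (n+1)).1 < ψ (u n).1 :=
      fun n => lt_of_lt_of_le (husucc n) (min_le_left _ _)
    have hanti : StrictAnti (fun n => ψ (u n).1) := strictAnti_nat_of_succ_lt hdec
    have hsmall : ∀ n : ℕ, ψ (u (n+1)).1 < infA + 1/(n+1) :=
      fun n => lt_of_lt_of_le (husucc n) (min_le_right _ _)
    have hrel : ∀ m n, m < n → ψ (u n).1 + q (u n).1 (u m).1 ≤ ψ (u m).1 := by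
      intro m n hmn
      have hlt : ψ (u n).1 < ψ (u m).1 := hanti hmn
      have hne : (u n).1 ≠ (u m).1 := by
        intro h; rw [h] at hlt; exact lt_irrefl _ hlt
      rcases hA.1 (u n).2 (u m).2 hne with h | h
      · exact (hr _ _).1 h
      · exfalso
        have := (hr _ _).1 h
        have hn := hq.nonneg (u m).1 (u n).1
        linarith
    have hqc : QCauchySeq q (fun n => (u n).1) := by
      intro ε hε
      obtain ⟨n₀, hn₀⟩ := exists_nat_one_div_lt hε
      refine ⟨n₀, fun m n hm hmn => ?_⟩
      have h1 := hrel m n hmn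
      obtain ⟨k, rfl⟩ : ∃ k, m = k + 1 := ⟨m - 1, by omega⟩
      have h2 : ψ (u (k+1)).1 < infA + 1/(k+1) := hsmall k
      have h3 : (1:ℝ)/(k+1) ≤ 1/(n₀+1) := by
        apply one_div_le_one_div_of_le (by positivity)
        have : (n₀:ℝ) ≤ k := by exact_mod_cast by omega
        linarith
      have h4 := hinfle _ (u n).2
      linarith
    have hcs : CauchySeq (fun n => (u n).1) := hq.cauchy _ hqc
    have hmem : ∀ n, (u n).1 ∈ {z : X | ψ z ≤ ψ a0} := by
      intro n
      have : ψ (u n).1 ≤ ψ (u 0).1 := hanti.antitone (Nat.zero_le n)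
      exact this
    obtain ⟨x, hxset, hxlim⟩ := cauchySeq_tendsto_of_isComplete (hcomp (ψ a0)) hmem hcs
    have hψx : ψ x ≤ infA := by
      by_contra hlt
      push_neg at hlt
      have h1 : ∀ᶠ z in nhds x, (infA + ψ x)/2 < ψ z := hψ x _ (by linarith)
      have h2 : ∀ᶠ n in atTop, (infA + ψ x)/2 < ψ (u n).1 := hxlim.eventually h1
      obtain ⟨N, hN⟩ := eventually_atTop.mp h2
      obtain ⟨M, hM⟩ := exists_nat_one_div_lt (show (0:ℝ) < (ψ x - infA)/2 by linarith)
      set n := max N M with hn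
      have ha := hN (n+1) (by omega)
      have hb := hsmall n
      have hc : (1:ℝ)/(n+1) ≤ 1/(M+1) := by
        apply one_div_le_one_div_of_le (by positivity)
        have : (M:ℝ) ≤ n := by exact_mod_cast le_max_right N M
        linarith
      linarith
    have hrx : ∀ z ∈ A, ψ x + q x z ≤ ψ z := by
      intro z hz
      by_contra hlt
      push_neg at hlt
      have h1 : ∀ᶠ w in nhds x, ψ z - ψ x < q w z := hq.lsc z x _ (by linarith)
      have h2 : ∀ᶠ n in atTop, ψ z - ψ x < q (u n).1 z := hxlim.eventually h1
      obtain ⟨N, hN⟩ := eventually_atTop.mp h2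
      have hAz := hcon z hz
      obtain ⟨M, hM⟩ := exists_nat_one_div_lt (sub_pos.2 hAz)
      set n := max N M with hn
      have ha := hN (n+1) (by omega)
      have hb : ψ (u (n+1)).1 < ψ z := by
        have hs := hsmall n
        have hc : (1:ℝ)/(n+1) ≤ 1/(M+1) := by
          apply one_div_le_one_div_of_le (by positivity)
          have : (M:ℝ) ≤ n := by exact_mod_cast le_max_right N M
          linarith
        linarith
      have hne : (u (n+1)).1 ≠ z := by intro hh; rw [hh] at hb; exact lt_irrefl _ hb
      rcases hA.1 (u (n+1)).2 hz hne with hc | hc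
      · have h5 := (hr _ _).1 hc
        have h6 := hinfle _ (u (n+1)).2
        linarith
      · have h5 := (hr _ _).1 hc
        have h6 := hq.nonneg z (u (n+1)).1
        linarith
    have hxA : x ∉ A := fun hxa => absurd (hcon x hxa) (not_lt.2 hψx)
    have hchain : IsChain r (insert x A) :=
      hA.1.insert (fun b hb _ => Or.inl ((hr _ _).2 (hrx b hb)))
    have heq := hA.2 hchain (Set.subset_insert _ _)
    exact hxA (heq ▸ Set.mem_insert x A)
  obtain ⟨z, hz, hzle⟩ := attain
  refine ⟨z, hz, fun w hw hwz => ?_⟩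
  rcases hA.1 hz hw (fun h => hwz h.symm) with h | h
  · exact (hr _ _).1 h
  · exfalso
    have h1 := (hr _ _).1 h
    have h2 := hinfle w hw
    have h3 : q w z ≤ 0 := by linarith
    have h4 : q w z = 0 := le_antisymm h3 (hq.nonneg w z)
    exact hwz (hq0 w z h4)

theorem basic_variational_principle {X : Type*} [UniformSpace X]
    (q : X → X → ℝ) (hq : IsIstance X q)
    (hq0 : ∀ x y : X, q x y = 0 → x = y)
    (ψ : X → ℝ) (hψ : LowerSemicontinuous ψ) (hbd : BddBelow (Set.range ψ))
    (hcomp : ∀ α : ℝ, IsComplete {z : X | ψ z ≤ α})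
    (r : X → X → Prop) (hr : ∀ y x, r y x ↔ ψ y + q y x ≤ ψ x)
    (B : Set X) (hB : B = {z : X | ψ z = ⨅ w, ψ w})
    (hstep : ∀ x ∉ B, ∃ y, y ≠ x ∧ ψ y + q y x ≤ ψ x)
    (x₀ : X) (hx₀ : x₀ ∉ B) :
    (∃ A : Set X, IsMaxChain r A ∧ x₀ ∈ A) ∧
    ∀ A : Set X, IsMaxChain r A → x₀ ∈ A →
      ∃! x, x ∈ A ∧ (∀ y ∈ A, y ≠ x → r x y) ∧
        (ψ x = ⨅ w, ψ w) ∧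
        (ψ x + q x x₀ - ψ x₀ = ⨅ z : A, (ψ z + q z x₀ - ψ x₀)) ∧
        ψ x + q x x₀ - ψ x₀ ≤ 0 ∧
        ∀ y, y ≠ x → 0 < ψ y + q y x - ψ x := by
  have antisymm : ∀ a b : X, ψ a + q a b ≤ ψ b → ψ b + q b a ≤ ψ a → a = b := by
    intro a b h1 h2
    have hn1 := hq.nonneg a b
    have hn2 := hq.nonneg b a
    exact hq0 a b (le_antisymm (by linarith) hn1)
  constructor
  · obtain ⟨M, hM, hsub⟩ :=
      (Set.subsingleton_singleton (a := x₀)).isChain (r := r) |>.exists_maxChain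
    exact ⟨M, hM, hsub rfl⟩
  intro A hA hx₀A
  obtain ⟨x, hxA, hmin⟩ := exists_min_of_maxChain q hq hq0 ψ hψ hbd hcomp r hr A hA x₀ hx₀A
  -- no strictly smaller element outside the chain either
  have noext : ∀ y : X, y ≠ x → ψ y + q y x ≤ ψ x → False := by
    intro y hyne hy
    have hyA : y ∉ A := by
      intro hyA
      exact hyne (antisymm y x hy (hmin y hyA hyne))
    have hchain : IsChain r (insert y A) := by
      refine hA.1.insert (fun b hb hbne => Or.inl ((hr _ _).2 ?_))
      by_cases hbx : b = x
      · subst hbx; exact hy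
      · have h1 := hmin b hb hbx
        have h2 : q y b ≤ q y x + q x b := hq.triangle b x y
        linarith
    have heq := hA.2 hchain (Set.subset_insert _ _)
    exact hyA (heq ▸ Set.mem_insert y A)
  have hxB : x ∈ B := by
    by_contra hxB
    obtain ⟨y, hyne, hy⟩ := hstep x hxB
    exact noext y hyne hy
  have hψeq : ψ x = ⨅ w, ψ w := by rw [hB] at hxB; exact hxB
  have hx₀ne : x₀ ≠ x := by
    intro h
    exact hx₀ (by rw [h]; exact hxB)
  have hmx₀ := hmin x₀ hx₀A hx₀ne
  haveI : Nonempty A := ⟨⟨x, hxA⟩⟩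
  have hle : ∀ z : A, ψ x + q x x₀ - ψ x₀ ≤ ψ z + q z x₀ - ψ x₀ := by
    rintro ⟨z, hz⟩
    by_cases hzx : z = x
    · subst hzx; exact le_refl _
    · have h1 := hmin z hz hzx
      have h2 : q x x₀ ≤ q x z + q z x₀ := hq.triangle x₀ z x
      simp only
      linarith
  refine ⟨x, ⟨hxA, fun y hy hyne => (hr _ _).2 (hmin y hy hyne), hψeq, ?_, ?_, ?_⟩, ?_⟩
  · have hbdd : BddBelow (Set.range fun z : A => ψ z + q z x₀ - ψ x₀) := by
      refine ⟨ψ x + q x x₀ - ψ x₀, ?_⟩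
      rintro v ⟨z, rfl⟩
      exact hle z
    apply le_antisymm
    · exact le_ciInf hle
    · exact ciInf_le hbdd ⟨x, hxA⟩
  · linarith
  · intro y hyne
    by_contra hle'
    push_neg at hle'
    exact noext y hyne (by linarith)
  · rintro y ⟨hyA, hymin, -, -, -, -⟩
    by_cases hyx : y = x
    · exact hyx
    · exact antisymm y x ((hr _ _).1 (hymin x hxA (fun h => hyx h.symm)))
        (hmin y hyA hyx)
end

section
/- Let $(X,\mathcal{U})$ be a Hausdorff uniform space, $q$ a $\mathcal{U}$-istance, and $\psi\colon X\to\mathbb{R}$ lower semicontinuous, bounded below, with complete sublevel sets $\{z:\psi(z)\le\alpha\}$ for all $\alpha\in\mathbb{R}$. Then for each $x_0\in X$ there exists $x\in X$ with $\psi(x)\le\psi(x_0)$ and $\psi(x)-q(y,x)<\psi(y)$ for all $y\ne x$. -/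
/-!
Order `X` by `y ≼ x ↔ ψ y + q y x ≤ ψ x`; the triangle inequality makes this transitive, and the
point sought is one with nothing strictly below it. Suppose there is none. A chain without least
element generates a Cauchy filter, because a descending sequence along which `ψ` decreases is
`q`-Cauchy, and its limit lies below the whole chain since `ψ + q(·, c)` is lower semicontinuous.
As `≼` need not be reflexive (`q c c` may be positive), a chain with least element `c` is bounded
instead by a point below `c`, which exists by assumption. Zorn's lemma then yields a minimal point,
a contradiction once `≼` is known to be antisymmetric: `q a b = q b a = 0` makes `a, b, a, b, …`
`q`-Cauchy, so `a` and `b` are not separated.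
-/

open Filter Set Topology

section Ekeland

variable {X : Type*} [UniformSpace X] {q : X → X → ℝ} {ψ : X → ℝ}

def EkelandBelow (q : X → X → ℝ) (ψ : X → ℝ) (y x : X) : Prop :=
  ψ y + q y x ≤ ψ x

theorem IsIstance.eq_of_le_zero [T0Space X] (hq : IsIstance X q) {a b : X}
    (hab : q a b ≤ 0) (hba : q b a ≤ 0) : a = b := by
  set u : ℕ → X := fun n => if Even n then a else b
  have hu : ∀ m n, q (u n) (u m) ≤ 0 := by
    have := hq.triangle a b a
    have := hq.triangle b a b
    intro m n
    simp only [u]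
    split_ifs <;> linarith
  have hcauchy : CauchySeq u :=
    hq.cauchy u fun ε hε => ⟨0, fun m n _ _ => (hu m n).trans_lt hε⟩
  refine eq_of_uniformity fun hV => ?_
  obtain ⟨N, hN⟩ := cauchySeq_iff.mp hcauchy _ hV
  simpa [u, Nat.even_add_one] using hN (2 * N) (by omega) (2 * N + 1) (by omega)

namespace EkelandBelow

theorem trans (hq : IsIstance X q) {x y z : X} (hzy : EkelandBelow q ψ z y)
    (hyx : EkelandBelow q ψ y x) : EkelandBelow q ψ z x := by
  unfold EkelandBelow at *
  linarith [hq.triangle x y z]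

theorem le (hq : IsIstance X q) {x y : X} (h : EkelandBelow q ψ y x) : ψ y ≤ ψ x := by
  unfold EkelandBelow at h
  linarith [hq.nonneg y x]

theorem antisymm [T0Space X] (hq : IsIstance X q) {x y : X} (hyx : EkelandBelow q ψ y x)
    (hxy : EkelandBelow q ψ x y) : y = x := by
  unfold EkelandBelow at *
  exact hq.eq_of_le_zero (by linarith [hq.nonneg x y]) (by linarith [hq.nonneg y x])

end EkelandBelow

theorem cauchySeq_of_ekelandBelow_succ (hq : IsIstance X q) (hbd : BddBelow (range ψ))
    {s : ℕ → X} (hs : ∀ n, EkelandBelow q ψ (s (n + 1)) (s n)) : CauchySeq s := by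
  have hbelow : ∀ m n, m < n → EkelandBelow q ψ (s n) (s m) := by
    intro m n hmn
    induction n, hmn using Nat.le_induction with
    | base => exact hs m
    | succ n _ ih => exact (hs n).trans hq ih
  have hanti : Antitone (ψ ∘ s) := antitone_nat_of_succ_le fun n => (hs n).le hq
  have hψs : CauchySeq (ψ ∘ s) :=
    (tendsto_atTop_ciInf hanti (hbd.mono (range_comp_subset_range s ψ))).cauchySeq
  refine hq.cauchy s fun ε hε => ?_
  obtain ⟨N, hN⟩ := Metric.cauchySeq_iff.mp hψs ε hε
  refine ⟨N, fun m n hNm hmn => ?_⟩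
  have hdist := hN m hNm.le n (hNm.trans hmn).le
  have hmn' := hbelow m n hmn
  rw [Real.dist_eq, Function.comp_apply, Function.comp_apply] at hdist
  unfold EkelandBelow at hmn'
  linarith [le_abs_self (ψ (s m) - ψ (s n))]

theorem ekelandBelow_of_le_nhds (hq : IsIstance X q) (hψ : LowerSemicontinuous ψ)
    {F : Filter X} [F.NeBot] {b c : X} (hb : F ≤ 𝓝 b) (hF : ∀ᶠ z in F, EkelandBelow q ψ z c) :
    EkelandBelow q ψ b c :=
  ((hψ.add (hq.lsc c)).isClosed_preimage (ψ c)).mem_of_tendsto (tendsto_id'.mpr hb) hF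

def ekelandChainFilter (q : X → X → ℝ) (ψ : X → ℝ) (C : Set X) : Filter X :=
  ⨅ c ∈ C, 𝓟 {z ∈ C | EkelandBelow q ψ z c}

theorem hasBasis_ekelandChainFilter (hq : IsIstance X q) {C : Set X}
    (hC : IsChain (EkelandBelow q ψ) C) (hne : C.Nonempty) :
    (ekelandChainFilter q ψ C).HasBasis (· ∈ C) fun c => {z ∈ C | EkelandBelow q ψ z c} := by
  refine hasBasis_biInf_principal (fun c hc d hd => ?_) hne
  rcases eq_or_ne c d with rfl | hcd
  · exact ⟨c, hc, subset_rfl, subset_rfl⟩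
  rcases hC hc hd hcd with h | h
  · exact ⟨c, hc, subset_rfl, fun z hz => ⟨hz.1, hz.2.trans hq h⟩⟩
  · exact ⟨d, hd, fun z hz => ⟨hz.1, hz.2.trans hq h⟩, subset_rfl⟩

theorem cauchy_ekelandChainFilter (hq : IsIstance X q) (hbd : BddBelow (range ψ)) {C : Set X}
    (hC : IsChain (EkelandBelow q ψ) C) (hne : C.Nonempty)
    (hdesc : ∀ c ∈ C, ∃ d ∈ C, EkelandBelow q ψ d c) : Cauchy (ekelandChainFilter q ψ C) := by
  have hF := hasBasis_ekelandChainFilter hq hC hne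
  refine cauchy_iff.mpr ⟨hF.neBot_iff.mpr fun hc => hdesc _ hc, fun V hV => ?_⟩
  obtain ⟨W, hW, hWsymm, hWV⟩ := comp_symm_mem_uniformity_sets hV
  by_contra! hbad
  have hstep : ∀ c : C, ∃ d : C, EkelandBelow q ψ d c ∧ (d.1, c.1) ∉ W := by
    rintro ⟨c, hc⟩
    obtain ⟨⟨y, z⟩, ⟨hy, hz⟩, hyz⟩ := not_subset.mp (hbad _ (hF.mem_of_mem hc))
    by_contra! hnear
    exact hyz (hWV (SetRel.prodMk_mem_comp (hnear ⟨y, hy.1⟩ hy.2)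
      (SetRel.symm W (hnear ⟨z, hz.1⟩ hz.2))))
  choose f hfbelow hfW using hstep
  obtain ⟨c₀, hc₀⟩ := hne
  set s : ℕ → X := fun n => (f^[n] ⟨c₀, hc₀⟩).1
  have hs : ∀ n, EkelandBelow q ψ (s (n + 1)) (s n) := fun n => by
    simp only [s, Function.iterate_succ_apply']
    exact hfbelow _
  obtain ⟨N, hN⟩ := cauchySeq_iff.mp (cauchySeq_of_ekelandBelow_succ hq hbd hs) W hW
  apply hfW (f^[N] ⟨c₀, hc₀⟩)
  simpa only [s, Function.iterate_succ_apply'] using hN (N + 1) (by omega) N le_rfl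

theorem IsChain.exists_forall_ekelandBelow_of_forall_exists_mem (hq : IsIstance X q)
    (hψ : LowerSemicontinuous ψ) (hbd : BddBelow (range ψ))
    (hcomp : ∀ α : ℝ, IsComplete {z : X | ψ z ≤ α}) {C : Set X}
    (hC : IsChain (EkelandBelow q ψ) C) (hne : C.Nonempty)
    (hdesc : ∀ c ∈ C, ∃ d ∈ C, EkelandBelow q ψ d c) : ∃ b, ∀ c ∈ C, EkelandBelow q ψ b c := by
  have hF := hasBasis_ekelandChainFilter hq hC hne
  have hcauchy := cauchy_ekelandChainFilter hq hbd hC hne hdesc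
  have := hcauchy.1
  obtain ⟨c₀, hc₀⟩ := hne
  obtain ⟨b, -, hb⟩ := hcomp (ψ c₀) _ hcauchy
    (le_principal_iff.mpr (mem_of_superset (hF.mem_of_mem hc₀) fun z hz => hz.2.le hq))
  exact ⟨b, fun c hc => ekelandBelow_of_le_nhds hq hψ hb
    (mem_of_superset (hF.mem_of_mem hc) fun z hz => hz.2)⟩

theorem IsChain.exists_forall_ekelandBelow (hq : IsIstance X q)
    (hψ : LowerSemicontinuous ψ) (hbd : BddBelow (range ψ))
    (hcomp : ∀ α : ℝ, IsComplete {z : X | ψ z ≤ α}) {C : Set X}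
    (hC : IsChain (EkelandBelow q ψ) C) (hne : C.Nonempty)
    (hbelow : ∀ c ∈ C, ∃ y, EkelandBelow q ψ y c) : ∃ b, ∀ c ∈ C, EkelandBelow q ψ b c := by
  by_cases hdesc : ∀ c ∈ C, ∃ d ∈ C, EkelandBelow q ψ d c
  · exact hC.exists_forall_ekelandBelow_of_forall_exists_mem hq hψ hbd hcomp hne hdesc
  push Not at hdesc
  obtain ⟨c, hc, hleast⟩ := hdesc
  obtain ⟨y, hy⟩ := hbelow c hc
  refine ⟨y, fun d hd => ?_⟩
  rcases eq_or_ne c d with rfl | hcd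
  · exact hy
  exact hy.trans hq ((hC hc hd hcd).resolve_right (hleast d hd))

theorem exists_forall_ekelandBelow_of_isChain_sublevel (hq : IsIstance X q)
    (hψ : LowerSemicontinuous ψ) (hbd : BddBelow (range ψ))
    (hcomp : ∀ α : ℝ, IsComplete {z : X | ψ z ≤ α}) {x₀ : X}
    (hbelow : ∀ x, ψ x ≤ ψ x₀ → ∃ y, EkelandBelow q ψ y x) (c : Set {z // ψ z ≤ ψ x₀})
    (hc : IsChain (fun a b => EkelandBelow q ψ b.1 a.1) c) :
    ∃ ub : {z // ψ z ≤ ψ x₀}, ∀ a ∈ c, EkelandBelow q ψ ub.1 a.1 := by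
  rcases c.eq_empty_or_nonempty with rfl | hne
  · exact ⟨⟨x₀, le_rfl⟩, by simp⟩
  have hC : IsChain (EkelandBelow q ψ) (Subtype.val '' c) := by
    rintro _ ⟨a, ha, rfl⟩ _ ⟨b, hb, rfl⟩ hab
    exact (hc ha hb (ne_of_apply_ne _ hab)).symm
  obtain ⟨b, hb⟩ := hC.exists_forall_ekelandBelow hq hψ hbd hcomp (hne.image _)
    fun _ ⟨a, _, ha⟩ => ha ▸ hbelow a a.2
  obtain ⟨c₀, hc₀⟩ := hne
  exact ⟨⟨b, ((hb _ (mem_image_of_mem _ hc₀)).le hq).trans c₀.2⟩,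
    fun a ha => hb _ (mem_image_of_mem _ ha)⟩

end Ekeland

theorem ekeland_variational_principle_i {X : Type*} [UniformSpace X] [T2Space X]
    (q : X → X → ℝ) (hq : IsIstance X q)
    (ψ : X → ℝ) (hψ : LowerSemicontinuous ψ) (hbd : BddBelow (Set.range ψ))
    (hcomp : ∀ α : ℝ, IsComplete {z : X | ψ z ≤ α})
    (x₀ : X) :
    ∃ x : X, ψ x ≤ ψ x₀ ∧ ∀ y, y ≠ x → ψ x - q y x < ψ y := by
  by_contra! H
  have hbelow : ∀ x, ψ x ≤ ψ x₀ → ∃ y, y ≠ x ∧ EkelandBelow q ψ y x := fun x hx => by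
    obtain ⟨y, hyx, hy⟩ := H x hx
    exact ⟨y, hyx, le_sub_iff_add_le.mp hy⟩
  have hbounded := exists_forall_ekelandBelow_of_isChain_sublevel hq hψ hbd hcomp
    fun x hx => (hbelow x hx).imp fun _ => And.right
  obtain ⟨m, hm⟩ := exists_maximal_of_chains_bounded hbounded fun hab hbc => hbc.trans hq hab
  obtain ⟨y, hym, hy⟩ := hbelow m m.2
  exact hym (hy.antisymm hq (hm ⟨y, (hy.le hq).trans m.2⟩ hy))
end

section
/- Let $(X,\mathcal{U})$ be a Hausdorff uniform space, $q$ a $\mathcal{U}$-istance, and $\psi\colon X\to\mathbb{R}$ lower semicontinuous, bounded below, with complete sublevel sets. Then for any $\varepsilon>0$ and each $x_0\in X$ with $q(x_0,x_0)=0$ and $\psi(x_0)\le\varepsilon+\inf_X\psi$, there exists $x\in X$ with $\psi(x)\le\psi(x_0)$, $q(x,x_0)\le 1$, and $\psi(x)-\varepsilon q(y,x)<\psi(y)$ for all $y\ne x$. -/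
/-!
Order `X` by `a ≼ b` iff `b = a` or `ψ b + q b a ≤ ψ a` (Brøndsted). Along a strictly increasing
sequence the values of `ψ` decrease and converge, and `q` between two terms is bounded by the drop
of `ψ`, so the sequence is `q`-Cauchy and hence Cauchy. Applied to a chain, this shows that its
filter of tails is Cauchy; it lives in a complete sublevel set of `ψ`, and its limit bounds the
chain since the sets `{b | a ≼ b}` are closed. Zorn's lemma then gives a maximal `x ≽ x₀`, and
maximality is the variational inequality, `≼` being antisymmetric because an alternating sequence
between two mutually comparable points is Cauchy. The statement for `ε` is this one for `ε q`.
-/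

open Filter Topology Set Uniformity

/-- The Brøndsted order: `EkelandLE q ψ a b` says that `b` improves on `a`, so that Zorn's lemma
produces the point of the variational principle as a maximal element. -/
def EkelandLE {X : Type*} (q : X → X → ℝ) (ψ : X → ℝ) (a b : X) : Prop :=
  b = a ∨ ψ b + q b a ≤ ψ a

def ekelandTails {X : Type*} (q : X → X → ℝ) (ψ : X → ℝ) (C : Set X) : Filter X :=
  ⨅ c : C, 𝓟 {z | z ∈ C ∧ EkelandLE q ψ c z}

section

variable {X : Type*} {q : X → X → ℝ} {ψ : X → ℝ}

theorem add_le_of_add_le_of_add_le (htri : ∀ x y z : X, q z x ≤ q z y + q y x) {a b c : X}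
    (hab : ψ b + q b a ≤ ψ a) (hbc : ψ c + q c b ≤ ψ b) : ψ c + q c a ≤ ψ a := by
  linarith [htri a b c]

theorem qCauchySeq_of_add_le_succ (hnonneg : ∀ x y, 0 ≤ q x y)
    (htri : ∀ x y z : X, q z x ≤ q z y + q y x) {d : ℕ → X}
    (hbd : BddBelow (range fun n => ψ (d n)))
    (hd : ∀ n, ψ (d (n + 1)) + q (d (n + 1)) (d n) ≤ ψ (d n)) : QCauchySeq q d := by
  have hdrop : ∀ m n, m < n → ψ (d n) + q (d n) (d m) ≤ ψ (d m) := by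
    intro m n hmn
    induction n, hmn using Nat.le_induction with
    | base => exact hd m
    | succ n _ ih => exact add_le_of_add_le_of_add_le htri ih (hd n)
  have hanti : Antitone fun n => ψ (d n) :=
    antitone_nat_of_succ_le fun n => by linarith [hd n, hnonneg (d (n + 1)) (d n)]
  intro δ hδ
  obtain ⟨N, hN⟩ := Metric.cauchySeq_iff'.1 (tendsto_atTop_ciInf hanti hbd).cauchySeq δ hδ
  refine ⟨N, fun m n hNm hmn => ?_⟩
  have hm : ψ (d m) ≤ ψ (d N) := hanti hNm.le
  have hn := hN n (hNm.trans hmn).le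
  rw [Real.dist_eq, abs_lt] at hn
  linarith [hdrop m n hmn]

theorem tail_mem_ekelandTails {C : Set X} {c : X} (hc : c ∈ C) :
    {z | z ∈ C ∧ EkelandLE q ψ c z} ∈ ekelandTails q ψ C :=
  mem_iInf_of_mem ⟨c, hc⟩ (mem_principal_self _)

end

namespace IsIstance

variable {X : Type*} [UniformSpace X] {q : X → X → ℝ} {ψ : X → ℝ}

theorem const_mul (hq : IsIstance X q) {ε : ℝ} (hε : 0 < ε) :
    IsIstance X fun x y => ε * q x y where
  nonneg x y := mul_nonneg hε.le (hq.nonneg x y)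
  triangle x y z := by nlinarith [hq.triangle x y z]
  lsc x := (continuous_const_mul ε).comp_lowerSemicontinuous (hq.lsc x)
    (monotone_mul_left_of_nonneg hε.le)
  cauchy d hd := hq.cauchy d fun δ hδ => by
    obtain ⟨N, hN⟩ := hd (ε * δ) (mul_pos hε hδ)
    exact ⟨N, fun m n hm hn => lt_of_mul_lt_mul_left (hN m n hm hn) hε.le⟩

theorem cauchySeq_of_add_le_succ (hq : IsIstance X q) {d : ℕ → X}
    (hbd : BddBelow (range fun n => ψ (d n)))
    (hd : ∀ n, ψ (d (n + 1)) + q (d (n + 1)) (d n) ≤ ψ (d n)) : CauchySeq d :=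
  hq.cauchy d (qCauchySeq_of_add_le_succ hq.nonneg hq.triangle hbd hd)

theorem eq_of_add_le_of_add_le [T0Space X] (hq : IsIstance X q) {a b : X}
    (hab : ψ b + q b a ≤ ψ a) (hba : ψ a + q a b ≤ ψ b) : a = b := by
  set d : ℕ → X := fun n => if Even n then a else b
  have hd : CauchySeq d := by
    refine hq.cauchySeq_of_add_le_succ (ψ := ψ) ⟨min (ψ a) (ψ b), ?_⟩ fun n => ?_
    · rintro _ ⟨n, rfl⟩
      by_cases hn : Even n <;> simp [d, hn]
    · by_cases hn : Even n <;> simpa [d, hn, Nat.even_add_one]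
  refine eq_of_uniformity fun hV => ?_
  obtain ⟨N, hN⟩ := cauchySeq_iff.1 hd _ hV
  simpa [d, Nat.even_add_one] using hN (2 * N) (by omega) (2 * N + 1) (by omega)

theorem ekelandLE_trans (hq : IsIstance X q) {a b c : X} :
    EkelandLE q ψ a b → EkelandLE q ψ b c → EkelandLE q ψ a c := by
  rintro (rfl | hab) (rfl | hbc)
  · exact Or.inl rfl
  · exact Or.inr hbc
  · exact Or.inr hab
  · exact Or.inr (add_le_of_add_le_of_add_le hq.triangle hab hbc)

theorem le_of_ekelandLE (hq : IsIstance X q) {a b : X} (h : EkelandLE q ψ a b) : ψ b ≤ ψ a := by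
  rcases h with rfl | h
  · exact le_rfl
  · linarith [hq.nonneg b a]

theorem ekelandLE_antisymm [T0Space X] (hq : IsIstance X q) {a b : X}
    (hab : EkelandLE q ψ a b) (hba : EkelandLE q ψ b a) : a = b := by
  rcases hab with rfl | hab
  · rfl
  rcases hba with rfl | hba
  · rfl
  exact hq.eq_of_add_le_of_add_le hab hba

theorem isClosed_setOf_ekelandLE [T1Space X] (hq : IsIstance X q) (hψ : LowerSemicontinuous ψ)
    (a : X) : IsClosed {b | EkelandLE q ψ a b} :=
  isClosed_singleton.union <| (hψ.add (hq.lsc a)).isClosed_preimage (ψ a)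

theorem ekelandTails_neBot (hq : IsIstance X q) {C : Set X} (hC : IsChain (EkelandLE q ψ) C)
    (hne : C.Nonempty) : (ekelandTails q ψ C).NeBot := by
  have : Nonempty C := hne.to_subtype
  refine iInf_neBot_of_directed' ?_ fun c => principal_neBot_iff.2 ⟨c, c.2, Or.inl rfl⟩
  rintro ⟨a, ha⟩ ⟨b, hb⟩
  have tail_anti : ∀ {c c'}, EkelandLE q ψ c c' →
      𝓟 {z | z ∈ C ∧ EkelandLE q ψ c' z} ≤ 𝓟 {z | z ∈ C ∧ EkelandLE q ψ c z} :=
    fun hcc' => principal_mono.2 fun z hz => ⟨hz.1, hq.ekelandLE_trans hcc' hz.2⟩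
  rcases eq_or_ne a b with rfl | hne
  · exact ⟨⟨a, ha⟩, le_rfl, le_rfl⟩
  rcases hC ha hb hne with hab | hba
  · exact ⟨⟨b, hb⟩, tail_anti hab, le_rfl⟩
  · exact ⟨⟨a, ha⟩, le_rfl, tail_anti hba⟩

theorem cauchy_ekelandTails (hq : IsIstance X q) (hbd : BddBelow (range ψ)) {C : Set X}
    (hC : IsChain (EkelandLE q ψ) C) (hne : C.Nonempty) : Cauchy (ekelandTails q ψ C) := by
  refine cauchy_iff.2 ⟨hq.ekelandTails_neBot hC hne, fun V hV => ?_⟩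
  by_contra! hbig
  obtain ⟨U, hU, hUsymm, hUV⟩ := comp_symm_mem_uniformity_sets hV
  -- Some member of each tail is `U`-far from the tip, since the tail is not `U ○ U`-small.
  have hjump : ∀ c ∈ C, ∃ c' ∈ C, ψ c' + q c' c ≤ ψ c ∧ (c, c') ∉ U := by
    intro c hc
    have far : ∀ w, w ∈ C ∧ EkelandLE q ψ c w → (c, w) ∉ U →
        ∃ c' ∈ C, ψ c' + q c' c ≤ ψ c ∧ (c, c') ∉ U := by
      rintro w ⟨hw, rfl | hcw⟩ hU'
      · exact absurd (refl_mem_uniformity hU) hU'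
      · exact ⟨w, hw, hcw, hU'⟩
    obtain ⟨⟨p, r⟩, ⟨hp, hr⟩, hpr⟩ := not_subset.1 (hbig _ (tail_mem_ekelandTails hc))
    by_cases hcp : (c, p) ∈ U
    · exact far r hr fun hcr => hpr (hUV ⟨c, SetRel.symm U hcp, hcr⟩)
    · exact far p hp hcp
  choose! next hnextC hnext_le hnextU using hjump
  obtain ⟨y₀, hy₀⟩ := hne
  set d : ℕ → X := fun n => next^[n] y₀
  have hdC : ∀ n, d n ∈ C := fun n => by
    induction n with
    | zero => exact hy₀
    | succ n ih => simpa [d, Function.iterate_succ_apply'] using hnextC _ ih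
  have hd : CauchySeq d := by
    refine hq.cauchySeq_of_add_le_succ (hbd.mono (range_comp_subset_range d ψ)) fun n => ?_
    simpa [d, Function.iterate_succ_apply'] using hnext_le _ (hdC n)
  obtain ⟨N, hN⟩ := cauchySeq_iff.1 hd U hU
  refine hnextU _ (hdC N) ?_
  simpa [d, Function.iterate_succ_apply'] using hN N le_rfl (N + 1) N.le_succ

theorem exists_forall_ekelandLE_of_isChain [T1Space X] (hq : IsIstance X q)
    (hψ : LowerSemicontinuous ψ) (hbd : BddBelow (range ψ))
    (hcomp : ∀ α : ℝ, IsComplete {z : X | ψ z ≤ α}) {C : Set X}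
    (hC : IsChain (EkelandLE q ψ) C) (hne : C.Nonempty) : ∃ z, ∀ c ∈ C, EkelandLE q ψ c z := by
  have := hq.ekelandTails_neBot hC hne
  obtain ⟨y₀, hy₀⟩ := hne
  have hsub : ekelandTails q ψ C ≤ 𝓟 {z | ψ z ≤ ψ y₀} :=
    le_principal_iff.2 <| mem_of_superset (tail_mem_ekelandTails hy₀)
      fun z hz => hq.le_of_ekelandLE hz.2
  obtain ⟨z, -, hz⟩ := hcomp (ψ y₀) _ (hq.cauchy_ekelandTails hbd hC ⟨y₀, hy₀⟩) hsub
  refine ⟨z, fun c hc => ?_⟩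
  show z ∈ {b | EkelandLE q ψ c b}
  exact (hq.isClosed_setOf_ekelandLE hψ c).mem_of_tendsto (f := id) (b := ekelandTails q ψ C) hz
    (mem_of_superset (tail_mem_ekelandTails hc) fun w hw => hw.2)

theorem exists_ekelandLE_forall_lt [T1Space X] (hq : IsIstance X q)
    (hψ : LowerSemicontinuous ψ) (hbd : BddBelow (range ψ))
    (hcomp : ∀ α : ℝ, IsComplete {z : X | ψ z ≤ α}) (x₀ : X) :
    ∃ x, EkelandLE q ψ x₀ x ∧ ∀ y, y ≠ x → ψ x < ψ y + q y x := by
  let _ : Preorder X :=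
    { le := EkelandLE q ψ
      le_refl := fun _ => Or.inl rfl
      le_trans := fun _ _ _ => hq.ekelandLE_trans }
  obtain ⟨m, hx₀m, hm⟩ := zorn_le_nonempty_Ici₀ x₀
    (fun C _ hC y hy => hq.exists_forall_ekelandLE_of_isChain hψ hbd hcomp hC ⟨y, hy⟩) x₀ le_rfl
  refine ⟨m, hx₀m, fun y hym => lt_of_not_ge fun hy => hym ?_⟩
  have hmy : EkelandLE q ψ m y := Or.inr hy
  exact (hq.ekelandLE_antisymm hmy (hm hmy)).symm

end IsIstance

theorem ekeland_variational_principle_ii {X : Type*} [UniformSpace X] [T2Space X]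
    (q : X → X → ℝ) (hq : IsIstance X q)
    (ψ : X → ℝ) (hψ : LowerSemicontinuous ψ) (hbd : BddBelow (Set.range ψ))
    (hcomp : ∀ α : ℝ, IsComplete {z : X | ψ z ≤ α})
    (ε : ℝ) (hε : 0 < ε) (x₀ : X) (hq₀ : q x₀ x₀ = 0)
    (hψ₀ : ψ x₀ ≤ ε + ⨅ z, ψ z) :
    ∃ x : X, ψ x ≤ ψ x₀ ∧ q x x₀ ≤ 1 ∧
      ∀ y, y ≠ x → ψ x - ε * q y x < ψ y := by
  have hεq := hq.const_mul hε
  obtain ⟨x, hx₀x, hmin⟩ := hεq.exists_ekelandLE_forall_lt hψ hbd hcomp x₀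
  refine ⟨x, hεq.le_of_ekelandLE hx₀x, ?_, fun y hy => by linarith [hmin y hy]⟩
  rcases hx₀x with rfl | hx
  · exact hq₀.le.trans zero_le_one
  · have hinf : ⨅ z, ψ z ≤ ψ x := ciInf_le hbd x
    exact le_of_mul_le_mul_left (by linarith : ε * q x x₀ ≤ ε * 1) hε
end
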